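/- (Key lemma in the proof of uniqueness of the pushout; group case.) Assume (Σ, ι, p) is a compatible extension of G by A and f : A → B is a continuous G-equivariant group homomorphism. Suppose (Σ', ι', p') is a compatible extension of G by B and f' : Σ → Σ' is a continuous group homomorphism satisfying ι' ∘ f = f' ∘ ι and p' ∘ f' = p. Then the map g̃ : B ⋊ Σ → Σ' defined by g̃(b, σ) = ι'(b)·f'(σ) is a continuous surjective group homomorphism whose kernel is exactly θ(A) = {(−f(a), ι(a)) : a ∈ A}. -/

import Mathlib

open Topology

section Core

variable {G S A : Type*}

/-- The semidirect product `B ⋊ S`, where `S` acts on `B` through `p : S →* G`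
and a given action of `G` on `B`.  Multiplication is
`(b₁, σ₁) * (b₂, σ₂) = (b₁ + p σ₁ • b₂, σ₁ * σ₂)`. -/
def SDP (B S : Type*) {G : Type*} [Group G] [Group S] [AddCommGroup B]
    [DistribMulAction G B] (p : S →* G) : Type _ := B × S

namespace SDP

variable {B : Type*} [Group G] [Group S] [AddCommGroup B] [DistribMulAction G B]
  (p : S →* G)

instance instGroup : Group (SDP B S p) where
  mul x y := (x.1 + p x.2 • y.1, x.2 * y.2)
  one := ((0 : B), (1 : S))
  inv x := (-((p x.2)⁻¹ • x.1), x.2⁻¹)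
  mul_assoc x y z := by
    refine Prod.ext ?_ (mul_assoc _ _ _)
    show (x.1 + p x.2 • y.1) + p (x.2 * y.2) • z.1
        = x.1 + p x.2 • (y.1 + p y.2 • z.1)
    simp [map_mul, mul_smul, smul_add, add_assoc]
  one_mul x := by
    refine Prod.ext ?_ (one_mul _)
    show (0 : B) + p 1 • x.1 = x.1
    simp
  mul_one x := by
    refine Prod.ext ?_ (mul_one _)
    show x.1 + p x.2 • (0 : B) = x.1
    simp
  inv_mul_cancel x := by
    refine Prod.ext ?_ (inv_mul_cancel _)
    show -((p x.2)⁻¹ • x.1) + p x.2⁻¹ • x.1 = 0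
    simp

instance instTopologicalSpace [TopologicalSpace B] [TopologicalSpace S] :
    TopologicalSpace (SDP B S p) :=
  instTopologicalSpaceProd

@[simp] lemma mul_def (x y : SDP B S p) :
    x * y = (x.1 + p x.2 • y.1, x.2 * y.2) := rfl

@[simp] lemma one_def : (1 : SDP B S p) = ((0 : B), (1 : S)) := rfl

@[simp] lemma inv_def (x : SDP B S p) :
    x⁻¹ = (-((p x.2)⁻¹ • x.1), x.2⁻¹) := rfl

end SDP

/-- A compatible extension `A → S → G` of the topological group `G` by the
abelian topological group `A`, which carries an action of `G`:
`ι` is a continuous injective group homomorphism which is a homeomorphism onto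
its image, `p` is a continuous open surjective homomorphism whose kernel is
exactly the image of `ι`, and conjugation in `S` induces the given action of
`G` on `A`. -/
structure IsCompatibleExtension
    [Group G] [TopologicalSpace G]
    [AddCommGroup A] [TopologicalSpace A] [DistribMulAction G A]
    [Group S] [TopologicalSpace S]
    (ι : A → S) (p : S →* G) : Prop where
  /-- The middle term is a topological group. -/
  topGroup : IsTopologicalGroup S
  /-- `ι` is a group homomorphism (from the additive group `A`). -/
  ι_hom : ∀ a a', ι (a + a') = ι a * ι a'
  /-- `ι` is a homeomorphism onto its image (in particular continuous and
  injective). -/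
  ι_embedding : IsEmbedding ι
  /-- `p` is continuous. -/
  p_cont : Continuous p
  /-- `p` is open. -/
  p_open : IsOpenMap p
  /-- `p` is surjective. -/
  p_surj : Function.Surjective p
  /-- The image of `ι` is exactly the kernel of `p`. -/
  range_ι : Set.range ι = ⇑p ⁻¹' {1}
  /-- The extension is compatible: conjugation induces the given `G`-action. -/
  compat : ∀ (σ : S) (a : A), σ * ι a * σ⁻¹ = ι (p σ • a)

end Core

/-!
Conjugation by `f' σ` acts on `ι' B` through `p' (f' σ) = p σ`, which is exactly the twist in the
multiplication of `B ⋊ Σ`; hence `(b, σ) ↦ ι' b * f' σ` is multiplicative. It is onto because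
`p` is onto and `ι' B = ker p'`. If `ι' b * f' σ = 1`, applying `p'` gives `p σ = 1`, so
`σ = ι a`, and then `ι' (b + f a) = 1` forces `b = -f a` by injectivity of `ι'`.
-/

namespace IsCompatibleExtension

variable {G A S : Type*} [Group G] [TopologicalSpace G] [AddCommGroup A] [TopologicalSpace A]
  [DistribMulAction G A] [Group S] [TopologicalSpace S] {ι : A → S} {p : S →* G}

theorem map_zero (hE : IsCompatibleExtension ι p) : ι 0 = 1 :=
  (mul_eq_left (a := ι 0)).mp (by rw [← hE.ι_hom, add_zero])

theorem map_neg (hE : IsCompatibleExtension ι p) (a : A) : ι (-a) = (ι a)⁻¹ :=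
  eq_inv_of_mul_eq_one_left (by rw [← hE.ι_hom, neg_add_cancel, hE.map_zero])

theorem mem_range_iff (hE : IsCompatibleExtension ι p) {σ : S} : σ ∈ Set.range ι ↔ p σ = 1 := by
  rw [hE.range_ι]
  rfl

theorem p_ι (hE : IsCompatibleExtension ι p) (a : A) : p (ι a) = 1 :=
  hE.mem_range_iff.mp ⟨a, rfl⟩

theorem mul_ι (hE : IsCompatibleExtension ι p) (σ : S) (a : A) : σ * ι a = ι (p σ • a) * σ := by
  rw [← hE.compat, inv_mul_cancel_right]

end IsCompatibleExtension

namespace SDP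

variable {G A B S S' : Type*} [Group G] [AddCommGroup B] [DistribMulAction G B]
  [Group S] [Group S'] {p : S →* G} {ι' : B → S'} {f' : S → S'}

def lift (ι' : B → S') (f' : S → S') : SDP B S p → S' :=
  fun x => ι' x.1 * f' x.2

theorem continuous_lift [TopologicalSpace B] [TopologicalSpace S] [TopologicalSpace S']
    [ContinuousMul S'] (hι' : Continuous ι') (hf' : Continuous f') :
    Continuous (lift ι' f' : SDP B S p → S') :=
  (hι'.comp continuous_fst).mul (hf'.comp continuous_snd)

variable [TopologicalSpace G] [TopologicalSpace B] [TopologicalSpace S'] {p' : S' →* G}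

theorem lift_mul (hE' : IsCompatibleExtension ι' p') (hf'_hom : ∀ σ τ, f' (σ * τ) = f' σ * f' τ)
    (hf'_p : ∀ σ, p' (f' σ) = p σ) (x y : SDP B S p) :
    lift ι' f' (x * y) = lift ι' f' x * lift ι' f' y :=
  calc ι' (x.1 + p x.2 • y.1) * f' (x.2 * y.2)
      = ι' x.1 * (ι' (p' (f' x.2) • y.1) * f' x.2) * f' y.2 := by
        rw [hE'.ι_hom, hf'_hom, hf'_p]
        simp only [mul_assoc]
    _ = ι' x.1 * f' x.2 * (ι' y.1 * f' y.2) := by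
        rw [← hE'.mul_ι]
        simp only [mul_assoc]

theorem lift_surjective (hp : Function.Surjective p) (hE' : IsCompatibleExtension ι' p')
    (hf'_p : ∀ σ, p' (f' σ) = p σ) : Function.Surjective (lift ι' f' : SDP B S p → S') := by
  intro τ
  obtain ⟨σ, hσ⟩ := hp (p' τ)
  obtain ⟨b, hb⟩ := hE'.mem_range_iff.mpr
    (show p' (τ * (f' σ)⁻¹) = 1 by rw [map_mul, map_inv, hf'_p, hσ, mul_inv_cancel])
  exact ⟨(b, σ), show ι' b * f' σ = τ by rw [hb, inv_mul_cancel_right]⟩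

theorem setOf_lift_eq_one [AddCommGroup A] [TopologicalSpace A] [DistribMulAction G A]
    [TopologicalSpace S] {ι : A → S} (hE : IsCompatibleExtension ι p)
    (hE' : IsCompatibleExtension ι' p') (f : A → B) (hf'_ι : ∀ a, ι' (f a) = f' (ι a))
    (hf'_p : ∀ σ, p' (f' σ) = p σ) :
    {x : SDP B S p | lift ι' f' x = 1} = Set.range fun a => ((-f a, ι a) : SDP B S p) := by
  ext x
  constructor
  · intro hx
    have hσ : p x.2 = 1 := by
      simpa [lift, hE'.p_ι, hf'_p] using congrArg p' hx
    obtain ⟨a, ha⟩ := hE.mem_range_iff.mpr hσ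
    have hb : x.1 + f a = 0 :=
      hE'.ι_embedding.injective (by rw [hE'.ι_hom, hf'_ι, ha, hE'.map_zero]; exact hx)
    exact ⟨a, Prod.ext (eq_neg_of_add_eq_zero_left hb).symm ha⟩
  · rintro ⟨a, rfl⟩
    show ι' (-f a) * f' (ι a) = 1
    rw [← hf'_ι, hE'.map_neg, inv_mul_cancel]

end SDP

theorem pushout_uniqueness_key_lemma_general
    {G A B S S' : Type*} [Group G] [TopologicalSpace G]
    [AddCommGroup A] [TopologicalSpace A]
    [DistribMulAction G A]
    [AddCommGroup B] [TopologicalSpace B]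
    [DistribMulAction G B]
    [Group S] [TopologicalSpace S]
    [Group S'] [TopologicalSpace S'] [IsTopologicalGroup S']
    (ι : A → S) (p : S →* G) (hE : IsCompatibleExtension ι p)
    (f : A → B)
    (ι' : B → S') (p' : S' →* G) (hE' : IsCompatibleExtension ι' p')
    (f' : S → S') (hf'_cont : Continuous f')
    (hf'_hom : ∀ σ τ, f' (σ * τ) = f' σ * f' τ)
    (hf'_ι : ∀ a, ι' (f a) = f' (ι a))
    (hf'_p : ∀ σ, p' (f' σ) = p σ)
    (θ : A → SDP B S p) (hθ : ∀ a, θ a = (-f a, ι a))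
    (gTilde : SDP B S p → S') (hgTilde : ∀ x : SDP B S p, gTilde x = ι' x.1 * f' x.2) :
    Continuous gTilde ∧
    Function.Surjective gTilde ∧
    (∀ x y : SDP B S p, gTilde (x * y) = gTilde x * gTilde y) ∧
    {x : SDP B S p | gTilde x = 1} = Set.range θ := by
  obtain rfl : gTilde = SDP.lift ι' f' := funext hgTilde
  obtain rfl : θ = fun a => (-f a, ι a) := funext hθ
  exact ⟨SDP.continuous_lift hE'.ι_embedding.continuous hf'_cont,
    SDP.lift_surjective hE.p_surj hE' hf'_p,
    SDP.lift_mul hE' hf'_hom hf'_p,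
    SDP.setOf_lift_eq_one hE hE' f hf'_ι hf'_p⟩

/-- (Key lemma in the proof of uniqueness of the pushout;
group case.)  Let `(Σ, ι, p)` be a compatible extension of `G` by `A`, let
`f : A → B` be a continuous `G`-equivariant homomorphism, let
`(Σ', ι', p')` be a compatible extension of `G` by `B`, and let
`f' : Σ → Σ'` be a continuous homomorphism with `ι' ∘ f = f' ∘ ι` and
`p' ∘ f' = p`.  Then `gTilde : B ⋊ Σ → Σ'`, `gTilde(b, σ) = ι'(b)·f'(σ)`, is a
continuous surjective group homomorphism with kernel exactly
`θ(A) = {(−f a, ι a) : a ∈ A}`. -/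
theorem pushout_uniqueness_key_lemma
    {G A B S S' : Type*} [Group G] [TopologicalSpace G] [IsTopologicalGroup G]
    [AddCommGroup A] [TopologicalSpace A] [IsTopologicalAddGroup A]
    [DistribMulAction G A] [ContinuousSMul G A]
    [AddCommGroup B] [TopologicalSpace B] [IsTopologicalAddGroup B]
    [DistribMulAction G B] [ContinuousSMul G B]
    [Group S] [TopologicalSpace S] [IsTopologicalGroup S]
    [Group S'] [TopologicalSpace S'] [IsTopologicalGroup S']
    (ι : A → S) (p : S →* G) (hE : IsCompatibleExtension ι p)
    (f : A → B) (hf_cont : Continuous f)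
    (hf_hom : ∀ a a', f (a + a') = f a + f a')
    (hf_equiv : ∀ (g : G) (a : A), f (g • a) = g • f a)
    (ι' : B → S') (p' : S' →* G) (hE' : IsCompatibleExtension ι' p')
    (f' : S → S') (hf'_cont : Continuous f')
    (hf'_hom : ∀ σ τ, f' (σ * τ) = f' σ * f' τ)
    (hf'_ι : ∀ a, ι' (f a) = f' (ι a))
    (hf'_p : ∀ σ, p' (f' σ) = p σ)
    (θ : A → SDP B S p) (hθ : ∀ a, θ a = (-f a, ι a))
    (gTilde : SDP B S p → S') (hgTilde : ∀ x : SDP B S p, gTilde x = ι' x.1 * f' x.2) :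
    Continuous gTilde ∧
    Function.Surjective gTilde ∧
    (∀ x y : SDP B S p, gTilde (x * y) = gTilde x * gTilde y) ∧
    {x : SDP B S p | gTilde x = 1} = Set.range θ :=
  pushout_uniqueness_key_lemma_general ι p hE f ι' p' hE' f' hf'_cont hf'_hom hf'_ι hf'_p θ hθ
    gTilde hgTilde
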